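/- arXiv:0911.5604 — 4 statements merged into one kernel-verified Lean document; each statement's English description precedes it below -/
import Mathlib

section
/- For every integer n ≥ 2, the commutator subgroup [G_n, G_n] of the crystallographic group G_n of holonomy n is contained in the translation subgroup {1} ⋉ ℤ^{n-1} and equals the subgroup corresponding to the subgroup of ℤ^{n-1} generated by the elements -e_i + e_{i+1} for 1 ≤ i ≤ n-2 together with -(e₁ + ⋯ + e_{n-2}) - 2·e_{n-1}; moreover [G_n, G_n] is free abelian of rank n-1 (in particular G_n is metabelian). -/
/-!
If `N` and `G` are abelian and `G` is generated by `t`, every commutator of `N ⋊ G` lies in `N`,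
and in fact in the image of `ξ - 1` for `ξ = φ t`, because `ξ ^ k - 1` is divisible by `ξ - 1`;
conversely `(ξ - 1) x = ⁅t, x⁆`. Hence `[G_n, G_n] = (ξ - 1) ℤ^{n-1}`, which is generated by the
images `(ξ - 1) eᵢ` of the basis: these are the listed elements. Moreover `1 + ξ + ⋯ + ξ^{n-1}`
kills `e₁ = ξ⁰ e₁, …, e_{n-1} = ξ^{n-2} e₁` and so vanishes; a vector fixed by `ξ` therefore
satisfies `n • v = 0`, so `ξ - 1` is injective and `[G_n, G_n] ≅ ℤ^{n-1}`.
-/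

open Multiplicative
open scoped commutatorElement

namespace SemidirectProduct
variable {N G : Type*} [CommGroup N] [CommGroup G] (φ : G →* MulAut N)

lemma commutatorElement_eq_inl (g h : N ⋊[φ] G) :
    ⁅g, h⁆ = inl ((φ g.right h.left / h.left) / (φ h.right g.left / g.left)) := by
  ext
  · simp only [commutatorElement_def, mul_left, inv_left, mul_right, inv_right, left_inl]
    rw [← MulAut.mul_apply, ← map_mul, ← MulAut.mul_apply, ← map_mul, mul_inv_cancel_comm,
      mul_inv_cancel, map_one, MulAut.one_apply, map_inv]
    simp only [div_eq_mul_inv, mul_inv, inv_inv, mul_comm, mul_left_comm, mul_assoc]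
  · simp only [commutatorElement_def, mul_right, inv_right, right_inl, mul_inv_cancel_comm,
      mul_inv_cancel]

lemma apply_div_self_mem_range {t : G} (ht : ∀ g, g ∈ Subgroup.zpowers t) (c : G) (x : N) :
    φ c x / x ∈ ((φ t).toMonoidHom / MonoidHom.id N).range := by
  have hc := ht c
  rw [Subgroup.zpowers_eq_closure] at hc
  induction hc using Subgroup.closure_induction generalizing x with
  | mem c hc => rw [Set.mem_singleton_iff.1 hc]; exact ⟨x, rfl⟩
  | one => simp
  | mul c d _ _ hc hd => simpa [MulAut.mul_apply] using mul_mem (hc (φ d x)) (hd x)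
  | inv c _ hc => simpa using inv_mem (hc ((φ c)⁻¹ x))

theorem commutator_eq_map_inl_range {t : G} (ht : ∀ g, g ∈ Subgroup.zpowers t) :
    commutator (N ⋊[φ] G) = ((φ t).toMonoidHom / MonoidHom.id N).range.map inl := by
  apply le_antisymm
  · rw [commutator_def, Subgroup.commutator_le]
    rintro g - h -
    rw [commutatorElement_eq_inl]
    exact Subgroup.mem_map_of_mem _
      (div_mem (apply_div_self_mem_range φ ht _ _) (apply_div_self_mem_range φ ht _ _))
  · rintro - ⟨-, ⟨x, rfl⟩, rfl⟩
    have h : ⁅(inr t : N ⋊[φ] G), (inl x : N ⋊[φ] G)⁆ = inl (φ t x / x) := by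
      simp [commutatorElement_eq_inl]
    exact h ▸ Subgroup.commutator_mem_commutator (Subgroup.mem_top _) (Subgroup.mem_top _)

end SemidirectProduct

/-- The cyclic permutation of coordinates of `ℤ^{m+1}`, acting on `ℤ^{m+1} / ℤ (1, …, 1) ≅ ℤ^m`
written in the basis of the images of the first `m` unit vectors. -/
structure IsCyclicShift {m : ℕ} (ξ : Module.End ℤ (Fin m → ℤ)) : Prop where
  single_succ : ∀ i j : Fin m, (j : ℕ) = i + 1 → ξ (Pi.single i 1) = Pi.single j 1
  single_last : ∀ i : Fin m, (i : ℕ) = m - 1 → ξ (Pi.single i 1) = -∑ j, Pi.single j 1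

namespace IsCyclicShift
variable {m : ℕ} {ξ : Module.End ℤ (Fin m → ℤ)} (hξ : IsCyclicShift ξ)
include hξ

lemma pow_single_zero (i : Fin m) : (ξ ^ (i : ℕ)) (Pi.single ⟨0, i.pos⟩ 1) = Pi.single i 1 := by
  obtain ⟨k, hk⟩ := i
  induction k with
  | zero => rfl
  | succ k ih =>
    rw [pow_succ', Module.End.mul_apply, ih (by omega), hξ.single_succ _ ⟨k + 1, hk⟩ rfl]

lemma sum_pow_apply_single_zero (h : 0 < m) :
    (∑ k ∈ Finset.range (m + 1), ξ ^ k) (Pi.single ⟨0, h⟩ 1) = 0 := by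
  have hlast : (ξ ^ m) (Pi.single ⟨0, h⟩ 1) = -∑ j, Pi.single j 1 := by
    obtain ⟨k, rfl⟩ : ∃ k, m = k + 1 := ⟨m - 1, by omega⟩
    have := hξ.pow_single_zero (Fin.last k)
    rw [Fin.val_last] at this
    rw [pow_succ', Module.End.mul_apply, this, hξ.single_last _ (by simp)]
  rw [LinearMap.sum_apply, Finset.sum_range_succ, hlast,
    ← Fin.sum_univ_eq_sum_range (fun k => (ξ ^ k) (Pi.single ⟨0, h⟩ 1))]
  simp only [hξ.pow_single_zero, add_neg_cancel]

lemma sum_pow_eq_zero : ∑ k ∈ Finset.range (m + 1), ξ ^ k = 0 := by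
  refine (Pi.basisFun ℤ (Fin m)).ext fun i => ?_
  have hcomm : Commute (∑ k ∈ Finset.range (m + 1), ξ ^ k) (ξ ^ (i : ℕ)) :=
    Commute.sum_left _ _ _ fun k _ => pow_mul_comm ξ k i
  have := congr($(hcomm.eq) (Pi.single ⟨0, i.pos⟩ 1))
  simpa [hξ.pow_single_zero, hξ.sum_pow_apply_single_zero] using this

lemma injective_sub_one : Function.Injective ⇑(ξ - 1) := by
  rw [injective_iff_map_eq_zero]
  intro v hv
  have hfix : ξ v = v := sub_eq_zero.1 hv
  have hpow (k : ℕ) : (ξ ^ k) v = v := by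
    rw [Module.End.pow_apply]; exact Function.iterate_fixed hfix k
  have := congr($(hξ.sum_pow_eq_zero) v)
  simp only [LinearMap.sum_apply, hpow, Finset.sum_const, Finset.card_range,
    LinearMap.zero_apply] at this
  exact (smul_eq_zero.mp this).resolve_left m.succ_ne_zero

lemma image_single_sub_one :
    ⇑(ξ - 1) '' Set.range (fun i : Fin m => Pi.single i (1 : ℤ)) =
      {v | ∃ i j : Fin m, (j : ℕ) = (i : ℕ) + 1 ∧ v = -Pi.single i 1 + Pi.single j 1} ∪
      {v | ∃ l : Fin m, (l : ℕ) = m - 1 ∧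
        v = -(∑ i ∈ Finset.univ.filter (fun i => i ≠ l), Pi.single i 1) - 2 • Pi.single l 1} := by
  have hsplit (l : Fin m) : ∑ j, Pi.single j (1 : ℤ) =
      ∑ i ∈ Finset.univ.filter (fun i => i ≠ l), Pi.single i 1 + Pi.single l 1 := by
    rw [Finset.filter_ne', Finset.sum_erase_add _ _ (Finset.mem_univ l)]
  have hlast (l : Fin m) (hl : (l : ℕ) = m - 1) : (ξ - 1) (Pi.single l 1) =
      -(∑ i ∈ Finset.univ.filter (fun i => i ≠ l), Pi.single i 1) - 2 • Pi.single l 1 := by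
    rw [LinearMap.sub_apply, Module.End.one_apply, hξ.single_last l hl, hsplit l]
    abel
  ext v
  constructor
  · rintro ⟨-, ⟨i, rfl⟩, rfl⟩
    by_cases hi : (i : ℕ) + 1 < m
    · refine Or.inl ⟨i, ⟨i + 1, hi⟩, rfl, ?_⟩
      rw [LinearMap.sub_apply, Module.End.one_apply, hξ.single_succ i ⟨i + 1, hi⟩ rfl,
        neg_add_eq_sub]
    · exact Or.inr ⟨i, by omega, hlast i (by omega)⟩
  · rintro (⟨i, j, hij, rfl⟩ | ⟨l, hl, rfl⟩)
    · refine ⟨Pi.single i 1, ⟨i, rfl⟩, ?_⟩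
      rw [LinearMap.sub_apply, Module.End.one_apply, hξ.single_succ _ _ hij, neg_add_eq_sub]
    · exact ⟨Pi.single l 1, ⟨l, rfl⟩, hlast l hl⟩

lemma range_sub_one :
    (LinearMap.range (ξ - 1)).toAddSubgroup = AddSubgroup.closure (
      {v | ∃ i j : Fin m, (j : ℕ) = (i : ℕ) + 1 ∧ v = -Pi.single i 1 + Pi.single j 1} ∪
      {v | ∃ l : Fin m, (l : ℕ) = m - 1 ∧
        v = -(∑ i ∈ Finset.univ.filter (fun i => i ≠ l), Pi.single i 1) - 2 • Pi.single l 1}) := by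
  rw [LinearMap.range_eq_map, ← (Pi.basisFun ℤ (Fin m)).span_eq, Submodule.map_span,
    Submodule.span_int_eq_addSubgroupClosure, ← hξ.image_single_sub_one]
  congr
  ext i
  simp

end IsCyclicShift

lemma ZMod.mem_zpowers_ofAdd_one {n : ℕ} (g : Multiplicative (ZMod n)) :
    g ∈ Subgroup.zpowers (ofAdd 1) := by
  refine Subgroup.mem_zpowers_iff.2 ⟨(toAdd g).cast, ?_⟩
  rw [← ofAdd_zsmul, zsmul_one, ZMod.intCast_cast, ZMod.cast_id', id, ofAdd_toAdd]

theorem crystallographic_commutator_general (n : ℕ)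
    (φ : Multiplicative (ZMod n) →* MulAut (Multiplicative (Fin (n - 1) → ℤ)))
    (hφ : ∀ i j : Fin (n - 1), (j : ℕ) = (i : ℕ) + 1 →
      φ (ofAdd 1) (ofAdd (Pi.single i 1)) = ofAdd (Pi.single j 1))
    (hφlast : ∀ i : Fin (n - 1), (i : ℕ) = n - 2 →
      φ (ofAdd 1) (ofAdd (Pi.single i 1)) = (∏ j : Fin (n - 1), ofAdd (Pi.single j 1))⁻¹) :
    commutator (Multiplicative (Fin (n - 1) → ℤ) ⋊[φ] Multiplicative (ZMod n)) ≤
        SemidirectProduct.inl.range ∧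
    commutator (Multiplicative (Fin (n - 1) → ℤ) ⋊[φ] Multiplicative (ZMod n)) =
      Subgroup.map SemidirectProduct.inl
        (AddSubgroup.toSubgroup (AddSubgroup.closure
          ({v | ∃ i j : Fin (n - 1), (j : ℕ) = (i : ℕ) + 1 ∧
              v = -Pi.single i 1 + Pi.single j 1} ∪
           {v | ∃ l : Fin (n - 1), (l : ℕ) = n - 2 ∧
              v = -(∑ i ∈ Finset.univ.filter (fun i => i ≠ l), Pi.single i 1) -
                  2 • Pi.single l 1}))) ∧
    Nonempty ((commutator (Multiplicative (Fin (n - 1) → ℤ) ⋊[φ] Multiplicative (ZMod n))) ≃*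
      Multiplicative (Fin (n - 1) → ℤ)) ∧
    (∀ x y : commutator (Multiplicative (Fin (n - 1) → ℤ) ⋊[φ] Multiplicative (ZMod n)),
      x * y = y * x) := by
  let ξ : Module.End ℤ (Fin (n - 1) → ℤ) :=
    (MonoidHom.toAdditive (φ (ofAdd 1)).toMonoidHom).toIntLinearMap
  have hξ : IsCyclicShift ξ :=
    ⟨fun i j hij => congrArg toAdd (hφ i j hij),
      fun i hi => (congrArg toAdd (hφlast i (by omega))).trans (by simp)⟩
  have hcomm := SemidirectProduct.commutator_eq_map_inl_range φ ZMod.mem_zpowers_ofAdd_one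
  have hrange :
      ((φ (ofAdd 1)).toMonoidHom / MonoidHom.id (Multiplicative (Fin (n - 1) → ℤ))).range =
        AddSubgroup.toSubgroup (LinearMap.range (ξ - 1)).toAddSubgroup := rfl
  have hinj : Function.Injective
      ((φ (ofAdd 1)).toMonoidHom / MonoidHom.id (Multiplicative (Fin (n - 1) → ℤ))) :=
    hξ.injective_sub_one
  let e := (MulEquiv.subgroupCongr hcomm).trans <|
    (Subgroup.equivMapOfInjective _ _ SemidirectProduct.inl_injective).symm.trans
      (MonoidHom.ofInjective hinj).symm
  refine ⟨hcomm ▸ Subgroup.map_le_range _ _, ?_, ⟨e⟩,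
    fun x y => e.injective (by rw [map_mul, map_mul, mul_comm])⟩
  rw [hcomm, hrange, hξ.range_sub_one, Nat.sub_sub]

theorem crystallographic_commutator (n : ℕ) (hn : 2 ≤ n)
    (φ : Multiplicative (ZMod n) →* MulAut (Multiplicative (Fin (n - 1) → ℤ)))
    (hφ : ∀ i j : Fin (n - 1), (j : ℕ) = (i : ℕ) + 1 →
      φ (ofAdd 1) (ofAdd (Pi.single i 1)) = ofAdd (Pi.single j 1))
    (hφlast : ∀ i : Fin (n - 1), (i : ℕ) = n - 2 →
      φ (ofAdd 1) (ofAdd (Pi.single i 1)) = (∏ j : Fin (n - 1), ofAdd (Pi.single j 1))⁻¹) :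
    commutator (Multiplicative (Fin (n - 1) → ℤ) ⋊[φ] Multiplicative (ZMod n)) ≤
        SemidirectProduct.inl.range ∧
    commutator (Multiplicative (Fin (n - 1) → ℤ) ⋊[φ] Multiplicative (ZMod n)) =
      Subgroup.map SemidirectProduct.inl
        (AddSubgroup.toSubgroup (AddSubgroup.closure
          ({v | ∃ i j : Fin (n - 1), (j : ℕ) = (i : ℕ) + 1 ∧
              v = -Pi.single i 1 + Pi.single j 1} ∪
           {v | ∃ l : Fin (n - 1), (l : ℕ) = n - 2 ∧
              v = -(∑ i ∈ Finset.univ.filter (fun i => i ≠ l), Pi.single i 1) -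
                  2 • Pi.single l 1}))) ∧
    Nonempty ((commutator (Multiplicative (Fin (n - 1) → ℤ) ⋊[φ] Multiplicative (ZMod n))) ≃*
      Multiplicative (Fin (n - 1) → ℤ)) ∧
    (∀ x y : commutator (Multiplicative (Fin (n - 1) → ℤ) ⋊[φ] Multiplicative (ZMod n)),
      x * y = y * x) :=
  crystallographic_commutator_general n φ hφ hφlast
end

section
/- For every integer n ≥ 2, the abelianization G_n^{ab} = G_n/[G_n, G_n] of the crystallographic group G_n of holonomy n is isomorphic to C_n × C_n, the direct product of two cyclic groups of order n. -/
/-!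
For `H` abelian, the abelianization of `N ⋊ H` is `A × H` as soon as `A` is a quotient of `N`
through which `N → (N ⋊ H)ᵃᵇ` factors and whose quotient map is `H`-invariant (the
coinvariants). For `N = ℤ^{n-1}` this quotient is `ℤ/n`, via the coordinate sum mod `n`: `ξ`
maps each basis vector to a basis vector, except the last, which goes to `-(e₁ + ⋯ + e_{n-1})`
with coordinate sum `-(n - 1) ≡ 1`. Conversely, in the abelianization all `eᵢ` become a single
element `x`, and the last relation reads `x = x^{-(n-1)}`, so `x ^ n = 1` and `a ↦ x ^ a` is
defined on `ℤ/n`.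
-/

open Multiplicative

theorem Multiplicative.monoidHom_ext_single {ι M : Type*} [Finite ι] [DecidableEq ι]
    [CommMonoid M] {f g : Multiplicative (ι → ℤ) →* M}
    (h : ∀ i, f (ofAdd (Pi.single i 1)) = g (ofAdd (Pi.single i 1))) : f = g :=
  MonoidHom.toAdditiveRight.injective <|
    AddMonoidHom.functions_ext' _ _ _ fun i => AddMonoidHom.ext_int (congrArg Additive.ofMul (h i))

theorem MulAut.apply_zpow_apply_of_invariant {N α : Type*} [Group N] (s : N → α) {σ : MulAut N}
    (hσ : ∀ v, s (σ v) = s v) (k : ℤ) (v : N) : s ((σ ^ k) v) = s v := by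
  induction k using Int.induction_on generalizing v with
  | zero => rfl
  | succ k ih => rw [zpow_add_one, MulAut.mul_apply, ih, hσ]
  | pred k ih => rw [zpow_sub_one, MulAut.mul_apply, ih, ← hσ, MulAut.apply_inv_self]

def zmodPowHom {M : Type*} [Group M] {n : ℕ} (x : M) (hx : x ^ n = 1) :
    Multiplicative (ZMod n) →* M :=
  AddMonoidHom.toMultiplicativeLeft <| ZMod.lift n
    ⟨zmultiplesHom (Additive M) (Additive.ofMul x), by
      rw [zmultiplesHom_apply, natCast_zsmul, ← ofMul_pow, hx, ofMul_one]⟩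

@[simp]
theorem zmodPowHom_ofAdd_one {M : Type*} [Group M] {n : ℕ} (x : M) (hx : x ^ n = 1) :
    zmodPowHom x hx (ofAdd 1) = x := by
  rw [zmodPowHom, AddMonoidHom.toMultiplicativeLeft_apply_apply, toAdd_ofAdd, ← Int.cast_one,
    ZMod.lift_coe]
  simp

namespace SemidirectProduct

section

variable {N H : Type*} [Group N] [Group H] {φ : H →* MulAut N}

theorem abelianization_of_inl_aut (h : H) (v : N) :
    Abelianization.of (inl (φ := φ) (φ h v)) = Abelianization.of (inl v) := by
  rw [inl_aut, map_mul, map_mul, mul_right_comm, ← map_mul, ← map_mul inr, mul_inv_cancel,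
    map_one, map_one, one_mul]

end

variable {N H A : Type*} [Group N] [CommGroup H] [CommGroup A] {φ : H →* MulAut N}

def abelianizationEquivProd (s : N →* A) (hs : Function.Surjective s)
    (hsφ : ∀ h v, s (φ h v) = s v) (t : A →* Abelianization (N ⋊[φ] H))
    (ht : t.comp s = Abelianization.of.comp inl) :
    Abelianization (N ⋊[φ] H) ≃* A × H :=
  let F : Abelianization (N ⋊[φ] H) →* A × H := Abelianization.lift <|
    lift ((MonoidHom.inl A H).comp s) (MonoidHom.inr A H) fun h => by ext v <;> simp [hsφ]
  let T : A × H →* Abelianization (N ⋊[φ] H) := t.coprod (Abelianization.of.comp inr)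
  have hsT : ∀ v, t (s v) = Abelianization.of (inl v) := DFunLike.congr_fun ht
  MonoidHom.toMulEquiv F T
    (by
      apply Abelianization.hom_ext
      apply hom_ext <;> ext <;> simp [F, T, hsT])
    (by
      refine MonoidHom.ext fun ⟨a, h⟩ => ?_
      obtain ⟨v, rfl⟩ := hs a
      simp [F, T, hsT])

end SemidirectProduct

def coordSumMod (m n : ℕ) : Multiplicative (Fin m → ℤ) →* Multiplicative (ZMod n) :=
  AddMonoidHom.toMultiplicative <|
    (Int.castAddHom (ZMod n)).comp (∑ i, Pi.evalAddMonoidHom (fun _ : Fin m => ℤ) i)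

@[simp]
theorem coordSumMod_ofAdd_single {m n : ℕ} (i : Fin m) (c : ℤ) :
    coordSumMod m n (ofAdd (Pi.single i c)) = ofAdd (c : ZMod n) := by
  simp [coordSumMod, Pi.single_apply]

theorem coordSumMod_surjective {m : ℕ} (n : ℕ) (hm : m ≠ 0) :
    Function.Surjective (coordSumMod m n) := fun c => by
  obtain ⟨k, hk⟩ := ZMod.intCast_surjective (toAdd c)
  exact ⟨ofAdd (Pi.single ⟨0, Nat.pos_of_ne_zero hm⟩ k), by simp [hk]⟩

section Holonomy

variable {n : ℕ}

theorem coordSumMod_generator_apply (σ : MulAut (Multiplicative (Fin (n - 1) → ℤ)))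
    (hshift : ∀ i j : Fin (n - 1), (j : ℕ) = (i : ℕ) + 1 →
      σ (ofAdd (Pi.single i 1)) = ofAdd (Pi.single j 1))
    (hlast : ∀ i : Fin (n - 1), (i : ℕ) = n - 2 →
      σ (ofAdd (Pi.single i 1)) = (∏ j : Fin (n - 1), ofAdd (Pi.single j 1))⁻¹)
    (v : Multiplicative (Fin (n - 1) → ℤ)) :
    coordSumMod (n - 1) n (σ v) = coordSumMod (n - 1) n v := by
  suffices (coordSumMod (n - 1) n).comp σ.toMonoidHom = coordSumMod (n - 1) n from
    DFunLike.congr_fun this v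
  refine Multiplicative.monoidHom_ext_single fun i => ?_
  rw [MonoidHom.comp_apply, MulEquiv.coe_toMonoidHom]
  by_cases hi : (i : ℕ) + 1 < n - 1
  · rw [hshift i ⟨i + 1, hi⟩ rfl, coordSumMod_ofAdd_single, coordSumMod_ofAdd_single]
  · have hn : 1 ≤ n := by omega
    rw [hlast i (by omega), map_inv, map_prod]
    simp only [coordSumMod_ofAdd_single, Finset.prod_const, Finset.card_univ, Fintype.card_fin]
    rw [Int.cast_one, ← ofAdd_nsmul, ← ofAdd_neg, nsmul_one, Nat.cast_sub hn, ZMod.natCast_self]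
    simp

variable (φ : Multiplicative (ZMod n) →* MulAut (Multiplicative (Fin (n - 1) → ℤ)))
    (hφ : ∀ i j : Fin (n - 1), (j : ℕ) = (i : ℕ) + 1 →
      φ (ofAdd 1) (ofAdd (Pi.single i 1)) = ofAdd (Pi.single j 1))
include hφ

theorem coordSumMod_holonomy_apply
    (hφlast : ∀ i : Fin (n - 1), (i : ℕ) = n - 2 →
      φ (ofAdd 1) (ofAdd (Pi.single i 1)) = (∏ j : Fin (n - 1), ofAdd (Pi.single j 1))⁻¹)
    (c : Multiplicative (ZMod n)) (v : Multiplicative (Fin (n - 1) → ℤ)) :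
    coordSumMod (n - 1) n (φ c v) = coordSumMod (n - 1) n v := by
  obtain ⟨k, hk⟩ := ZMod.intCast_surjective (toAdd c)
  have hc : c = ofAdd 1 ^ k := by rw [← ofAdd_zsmul, zsmul_one, hk, ofAdd_toAdd]
  rw [hc, map_zpow]
  exact MulAut.apply_zpow_apply_of_invariant _ (coordSumMod_generator_apply _ hφ hφlast) k v

theorem abelianization_of_inl_single_eq (i j : Fin (n - 1)) :
    Abelianization.of (SemidirectProduct.inl (φ := φ) (ofAdd (Pi.single i 1))) =
      Abelianization.of (SemidirectProduct.inl (φ := φ) (ofAdd (Pi.single j 1))) := by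
  have hpos : 0 < n - 1 := i.pos
  suffices h : ∀ k (hk : k < n - 1),
      Abelianization.of (SemidirectProduct.inl (φ := φ) (ofAdd (Pi.single ⟨k, hk⟩ 1))) =
        Abelianization.of (SemidirectProduct.inl (φ := φ) (ofAdd (Pi.single ⟨0, hpos⟩ 1))) by
    rw [h i i.isLt, h j j.isLt]
  intro k hk
  induction k with
  | zero => rfl
  | succ k ih =>
    rw [← hφ ⟨k, by omega⟩ ⟨k + 1, hk⟩ rfl, SemidirectProduct.abelianization_of_inl_aut, ih]

theorem abelianization_of_inl_single_pow_eq_one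
    (hφlast : ∀ i : Fin (n - 1), (i : ℕ) = n - 2 →
      φ (ofAdd 1) (ofAdd (Pi.single i 1)) = (∏ j : Fin (n - 1), ofAdd (Pi.single j 1))⁻¹)
    (i : Fin (n - 1)) :
    Abelianization.of (SemidirectProduct.inl (φ := φ) (ofAdd (Pi.single i 1))) ^ n = 1 := by
  set x := Abelianization.of (SemidirectProduct.inl (φ := φ) (ofAdd (Pi.single i 1)))
  have hi := i.isLt
  let last : Fin (n - 1) := ⟨n - 2, by omega⟩
  have hx : x = (x ^ (n - 1))⁻¹ :=
    calc x = Abelianization.of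
            (SemidirectProduct.inl (φ (ofAdd 1) (ofAdd (Pi.single last 1)))) := by
          rw [SemidirectProduct.abelianization_of_inl_aut, abelianization_of_inl_single_eq φ hφ]
      _ = (x ^ (n - 1))⁻¹ := by
          rw [hφlast last rfl, map_inv, map_inv,
            ← MonoidHom.comp_apply Abelianization.of SemidirectProduct.inl, map_prod]
          simp [abelianization_of_inl_single_eq φ hφ _ i, x]
  calc x ^ n = x ^ (n - 1) * x := by rw [← pow_succ, Nat.sub_add_cancel (by omega)]
    _ = 1 := mul_eq_one_iff_inv_eq.mpr hx.symm

end Holonomy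

theorem crystallographic_abelianization (n : ℕ) (hn : 2 ≤ n)
    (φ : Multiplicative (ZMod n) →* MulAut (Multiplicative (Fin (n - 1) → ℤ)))
    (hφ : ∀ i j : Fin (n - 1), (j : ℕ) = (i : ℕ) + 1 →
      φ (ofAdd 1) (ofAdd (Pi.single i 1)) = ofAdd (Pi.single j 1))
    (hφlast : ∀ i : Fin (n - 1), (i : ℕ) = n - 2 →
      φ (ofAdd 1) (ofAdd (Pi.single i 1)) = (∏ j : Fin (n - 1), ofAdd (Pi.single j 1))⁻¹) :
    Nonempty (Abelianization (Multiplicative (Fin (n - 1) → ℤ) ⋊[φ] Multiplicative (ZMod n)) ≃*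
      Multiplicative (ZMod n) × Multiplicative (ZMod n)) := by
  let i₀ : Fin (n - 1) := ⟨0, by omega⟩
  let t := zmodPowHom _ (abelianization_of_inl_single_pow_eq_one φ hφ hφlast i₀)
  have ht : t.comp (coordSumMod (n - 1) n) = Abelianization.of.comp SemidirectProduct.inl :=
    Multiplicative.monoidHom_ext_single fun i => by
      simp [t, abelianization_of_inl_single_eq φ hφ i₀ i]
  exact ⟨SemidirectProduct.abelianizationEquivProd _ (coordSumMod_surjective n (by omega))
    (coordSumMod_holonomy_apply φ hφ hφlast) t ht⟩
end

section
/- For every integer n ≥ 2, the center of the crystallographic group G_n of holonomy n is trivial. -/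
open Multiplicative

theorem crystallographic_center_trivial (n : ℕ) (hn : 2 ≤ n)
    (φ : Multiplicative (ZMod n) →* MulAut (Multiplicative (Fin (n - 1) → ℤ)))
    (hφ : ∀ i j : Fin (n - 1), (j : ℕ) = (i : ℕ) + 1 →
      φ (ofAdd 1) (ofAdd (Pi.single i 1)) = ofAdd (Pi.single j 1))
    (hφlast : ∀ i : Fin (n - 1), (i : ℕ) = n - 2 →
      φ (ofAdd 1) (ofAdd (Pi.single i 1)) = (∏ j : Fin (n - 1), ofAdd (Pi.single j 1))⁻¹) :
    Subgroup.center (Multiplicative (Fin (n - 1) → ℤ) ⋊[φ] Multiplicative (ZMod n)) = ⊥ := by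
  haveI : NeZero n := ⟨by omega⟩
  have hlastlt : n - 2 < n - 1 := by omega
  -- value of ξ on basis vectors, pointwise
  have hv : ∀ i j : Fin (n - 1), toAdd (φ (ofAdd 1) (ofAdd (Pi.single i 1))) j
      = (if (j : ℕ) = (i : ℕ) + 1 then 1 else 0) + (if (i : ℕ) = n - 2 then -1 else 0) := by
    intro i j
    rcases Nat.lt_or_ge (i : ℕ) (n - 2) with hi | hi
    · have hj' : (i : ℕ) + 1 < n - 1 := by omega
      rw [hφ i ⟨(i : ℕ) + 1, hj'⟩ rfl, toAdd_ofAdd, Pi.single_apply,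
        if_neg (by omega : ¬ (i : ℕ) = n - 2), add_zero,
        if_congr (by rw [Fin.ext_iff]) rfl rfl]
    · have hi' : (i : ℕ) = n - 2 := by have := i.isLt; omega
      rw [hφlast i hi', ← ofAdd_sum, toAdd_inv, toAdd_ofAdd]
      have hs : (∑ k : Fin (n - 1), Pi.single k (1 : ℤ)) = fun _ => 1 :=
        Finset.univ_sum_single _
      rw [Pi.neg_apply, hs]
      have hjne : ¬ (j : ℕ) = (i : ℕ) + 1 := by have := j.isLt; omega
      rw [if_neg hjne, if_pos hi']
      norm_num
  -- the pointwise formula for ξ on a general element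
  have key : ∀ (a : Fin (n - 1) → ℤ) (j : Fin (n - 1)),
      toAdd (φ (ofAdd 1) (ofAdd a)) j
        = (if _ : 0 < (j : ℕ) then
            a ⟨(j : ℕ) - 1, lt_of_le_of_lt (Nat.sub_le _ _) j.isLt⟩ else 0)
          - a ⟨n - 2, hlastlt⟩ := by
    intro a j
    have expand : φ (ofAdd 1) (ofAdd a)
        = ∏ i : Fin (n - 1), (φ (ofAdd 1) (ofAdd (Pi.single i 1))) ^ (a i) := by
      conv_lhs => rw [← Finset.univ_sum_single a]
      rw [ofAdd_sum, map_prod]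
      refine Finset.prod_congr rfl fun i _ => ?_
      rw [← map_zpow, ← ofAdd_zsmul]
      congr 2
      funext t
      simp [Pi.single_apply, mul_comm]
    rw [expand, toAdd_prod, Finset.sum_apply]
    have hterm : ∀ i : Fin (n - 1),
        toAdd ((φ (ofAdd 1) (ofAdd (Pi.single i 1))) ^ (a i)) j
          = (if (j : ℕ) = (i : ℕ) + 1 then a i else 0)
              + (if (i : ℕ) = n - 2 then -(a i) else 0) := by
      intro i
      rw [toAdd_zpow, Pi.smul_apply, smul_eq_mul, hv]
      simp only [mul_add, mul_ite, mul_one, mul_zero, mul_neg_one]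
    rw [Finset.sum_congr rfl fun i _ => hterm i, Finset.sum_add_distrib]
    congr 1
    · by_cases h0 : 0 < (j : ℕ)
      · rw [dif_pos h0]
        have hlt : (j : ℕ) - 1 < n - 1 := lt_of_le_of_lt (Nat.sub_le _ _) j.isLt
        rw [Finset.sum_congr rfl (fun (i : Fin (n - 1)) _ => if_congr
          (show ((j : ℕ) = (i : ℕ) + 1) ↔ i = ⟨(j : ℕ) - 1, hlt⟩ by
            rw [Fin.ext_iff]; simp; omega) rfl rfl)]
        rw [Finset.sum_ite_eq' Finset.univ (⟨(j : ℕ) - 1, hlt⟩ : Fin (n - 1)) a]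
        simp
      · rw [dif_neg h0]
        refine Finset.sum_eq_zero fun i _ => if_neg (by omega)
    · rw [Finset.sum_congr rfl (fun (i : Fin (n - 1)) _ => if_congr
        (show ((i : ℕ) = n - 2) ↔ i = ⟨n - 2, hlastlt⟩ by rw [Fin.ext_iff]) rfl rfl)]
      rw [Finset.sum_ite_eq' Finset.univ (⟨n - 2, hlastlt⟩ : Fin (n - 1))
        (fun i => -(a i))]
      simp
  -- fixed points of ξ are trivial
  have fix : ∀ a : Fin (n - 1) → ℤ, φ (ofAdd 1) (ofAdd a) = ofAdd a → a = 0 := by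
    intro a hfa
    have hj : ∀ j : Fin (n - 1), a j
        = (if _ : 0 < (j : ℕ) then
            a ⟨(j : ℕ) - 1, lt_of_le_of_lt (Nat.sub_le _ _) j.isLt⟩ else 0)
          - a ⟨n - 2, hlastlt⟩ := by
      intro j
      conv_lhs => rw [show a j = toAdd (ofAdd a) j from rfl, ← hfa]
      exact key a j
    set c := a ⟨n - 2, hlastlt⟩ with hc
    have step : ∀ m : ℕ, ∀ hm : m < n - 1, a ⟨m, hm⟩ = -((m : ℤ) + 1) * c := by
      intro m
      induction m with
      | zero =>
        intro hm
        have := hj ⟨0, hm⟩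
        simpa using this
      | succ m ih =>
        intro hm
        have hm' : m < n - 1 := by omega
        have h := hj ⟨m + 1, hm⟩
        rw [dif_pos (by simp)] at h
        have he : (⟨(m + 1 : ℕ) - 1, lt_of_le_of_lt (Nat.sub_le _ _)
            (Fin.isLt ⟨m + 1, hm⟩)⟩ : Fin (n - 1)) = ⟨m, hm'⟩ := by
          apply Fin.ext; simp
        rw [he, ih hm'] at h
        rw [h]
        push_cast
        ring
    have hc0 : c = 0 := by
      have h := step (n - 2) hlastlt
      rw [← hc] at h
      have hcast : ((n - 2 : ℕ) : ℤ) + 1 = ((n : ℤ) - 1) := by omega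
      rw [hcast] at h
      have hN : (2 : ℤ) ≤ (n : ℤ) := by exact_mod_cast hn
      nlinarith [h]
    funext j
    have h := step (j : ℕ) j.isLt
    rw [Fin.eta] at h
    rw [h, hc0]
    simp
  -- iterates of ξ on the first basis vector
  have h0N : 0 < n - 1 := by omega
  have K : ∀ m : ℕ, ∀ hm : m < n - 1,
      φ (ofAdd ((m : ℕ) : ZMod n)) (ofAdd (Pi.single (⟨0, h0N⟩ : Fin (n - 1)) 1))
        = ofAdd (Pi.single (⟨m, hm⟩ : Fin (n - 1)) 1) := by
    intro m
    induction m with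
    | zero => intro hm; simp
    | succ m ih =>
      intro hm
      have hm' : m < n - 1 := by omega
      have hco : ((m + 1 : ℕ) : ZMod n) = (1 : ZMod n) + ((m : ℕ) : ZMod n) := by
        push_cast; ring
      rw [hco, ofAdd_add, map_mul, MulAut.mul_apply, ih hm',
        hφ ⟨m, hm'⟩ ⟨m + 1, hm⟩ rfl]
  -- now the main argument
  rw [eq_bot_iff]
  intro g hg
  rw [Subgroup.mem_center_iff] at hg
  rw [Subgroup.mem_bot]
  have h1 : ∀ b, φ g.right b = b := by
    intro b
    have h := congrArg SemidirectProduct.left (hg (SemidirectProduct.inl b))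
    simp only [SemidirectProduct.mul_left, SemidirectProduct.left_inl,
      SemidirectProduct.right_inl, map_one, MulAut.one_apply] at h
    rw [mul_comm g.left] at h
    exact mul_right_cancel h.symm
  have h2 : ∀ m, φ m g.left = g.left := by
    intro m
    have h := congrArg SemidirectProduct.left (hg (SemidirectProduct.inr m))
    simp only [SemidirectProduct.mul_left, SemidirectProduct.left_inr,
      SemidirectProduct.right_inr, map_one, MulAut.one_apply, one_mul, mul_one] at h
    exact h
  have hleft : g.left = 1 := by
    have h := h2 (ofAdd 1)
    have h0 : toAdd g.left = 0 := fix (toAdd g.left) (by rw [ofAdd_toAdd]; exact h)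
    rw [← ofAdd_toAdd g.left, h0, ofAdd_zero]
  have hright : g.right = 1 := by
    set mv := (toAdd g.right).val with hmv
    have hk : g.right = ofAdd ((mv : ZMod n)) := by
      rw [hmv, ZMod.natCast_rightInverse (toAdd g.right), ofAdd_toAdd]
    have hmvlt : mv < n := ZMod.val_lt _
    have he0 := h1 (ofAdd (Pi.single (⟨0, h0N⟩ : Fin (n - 1)) 1))
    rcases Nat.eq_zero_or_pos mv with hz | hpos
    · rw [hmv] at hz
      have h0 : toAdd g.right = 0 := (ZMod.val_eq_zero _).1 hz
      rw [← ofAdd_toAdd g.right, h0, ofAdd_zero]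
    · exfalso
      rcases Nat.lt_or_ge mv (n - 1) with hlt | hge
      · rw [hk, K mv hlt] at he0
        have h := congrArg
          (fun x : Multiplicative (Fin (n - 1) → ℤ) => toAdd x ⟨mv, hlt⟩) he0
        simp only [toAdd_ofAdd] at h
        rw [Pi.single_apply, Pi.single_apply, if_pos rfl,
          if_neg (by rw [Fin.ext_iff]; simp; omega)] at h
        exact one_ne_zero h
      · have hmvN : mv = n - 1 := by omega
        have hco : ((mv : ℕ) : ZMod n) = (1 : ZMod n) + ((n - 2 : ℕ) : ZMod n) := by
          have h' : mv = 1 + (n - 2) := by omega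
          rw [h', Nat.cast_add, Nat.cast_one]
        rw [hk, hco, ofAdd_add, map_mul, MulAut.mul_apply,
          K (n - 2) hlastlt, hφlast ⟨n - 2, hlastlt⟩ rfl] at he0
        have h := congrArg
          (fun x : Multiplicative (Fin (n - 1) → ℤ) => toAdd x ⟨0, h0N⟩) he0
        simp only [← ofAdd_sum, toAdd_inv, toAdd_ofAdd, Pi.neg_apply] at h
        rw [Finset.univ_sum_single (fun _ => (1 : ℤ))] at h
        rw [Pi.single_apply, if_pos rfl] at h
        norm_num at h
  exact SemidirectProduct.ext hleft hright
end

section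
/- Let p be an odd prime and s ≥ 1 an integer, and let K_s = C_{p^s} ⋉ ℤ_p^{d_s} be the pro-p-group of finite coclass with central exponent s, where d_s = p^{s-1}(p-1). Then the center of K_s is trivial. -/
set_option maxHeartbeats 1000000

lemma aux_linear {p : ℕ} [hp : Fact p.Prime] {d : ℕ}
    (ψ : (Fin d → ℤ_[p]) →+ (Fin d → ℤ_[p])) (c : ℤ_[p]) (x : Fin d → ℤ_[p]) :
    ψ (c • x) = c • ψ x := by
  have hpow : ∀ (u : ℤ_[p]) (y : Fin d → ℤ_[p]) (n : ℕ),
      ψ (((p : ℤ_[p]) ^ n * u) • y) = (p : ℤ_[p]) ^ n • ψ (u • y) := by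
    intro u y n
    have h1 : ((p : ℤ_[p]) ^ n * u) • y = ((p ^ n : ℕ) : ℤ_[p]) • (u • y) := by
      rw [smul_smul]; push_cast; ring_nf
    rw [h1, Nat.cast_smul_eq_nsmul, map_nsmul, ← Nat.cast_smul_eq_nsmul (R := ℤ_[p])]
    push_cast; rfl
  have key : ∀ n : ℕ, ∃ z : Fin d → ℤ_[p], ψ (c • x) - c • ψ x = (p : ℤ_[p]) ^ n • z := by
    intro n
    obtain ⟨u, hu⟩ := (Ideal.mem_span_singleton).1 (PadicInt.appr_spec n c)
    refine ⟨ψ (u • x) - u • ψ x, ?_⟩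
    set a := c.appr n with ha
    have hc : c = ((a : ℕ) : ℤ_[p]) + (p : ℤ_[p]) ^ n * u := by
      rw [← hu]; ring
    have hl : ψ (c • x) = (a : ℤ_[p]) • ψ x + (p : ℤ_[p]) ^ n • ψ (u • x) := by
      calc ψ (c • x) = ψ ((((a : ℕ) : ℤ_[p]) + (p : ℤ_[p]) ^ n * u) • x) := by rw [← hc]
        _ = (a : ℤ_[p]) • ψ x + (p : ℤ_[p]) ^ n • ψ (u • x) := by
            rw [add_smul, map_add, hpow, Nat.cast_smul_eq_nsmul, map_nsmul,
              ← Nat.cast_smul_eq_nsmul (R := ℤ_[p])]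
    have hr : c • ψ x = (a : ℤ_[p]) • ψ x + (p : ℤ_[p]) ^ n • (u • ψ x) := by
      rw [hc, add_smul, mul_smul]
    rw [hl, hr, smul_sub]
    abel
  have hz : ∀ j : Fin d, (ψ (c • x) - c • ψ x) j = 0 := by
    intro j
    by_contra hne
    have hnorm : ∀ n : ℕ, ‖(ψ (c • x) - c • ψ x) j‖ ≤ ((p : ℝ)⁻¹) ^ n := by
      intro n
      obtain ⟨z, hzz⟩ := key n
      rw [hzz]
      have h2 : ((p : ℤ_[p]) ^ n • z) j = (p : ℤ_[p]) ^ n * z j := rfl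
      rw [h2]
      calc ‖(p : ℤ_[p]) ^ n * z j‖ = ‖(p : ℤ_[p]) ^ n‖ * ‖z j‖ := norm_mul _ _
        _ ≤ ‖(p : ℤ_[p]) ^ n‖ * 1 :=
            mul_le_mul_of_nonneg_left (PadicInt.norm_le_one _) (norm_nonneg _)
        _ = ‖(p : ℤ_[p]) ^ n‖ := mul_one _
        _ ≤ ((p : ℝ)⁻¹) ^ n := by
            rw [PadicInt.norm_p_pow, zpow_neg, inv_pow, zpow_natCast]
    have h0 : 0 < ‖(ψ (c • x) - c • ψ x) j‖ := norm_pos_iff.2 hne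
    have hlt1 : (p : ℝ)⁻¹ < 1 := by
      rw [inv_lt_one_iff₀]
      right
      exact_mod_cast hp.out.one_lt
    obtain ⟨n, hn⟩ := exists_pow_lt_of_lt_one h0 hlt1
    exact absurd (hnorm n) (not_le.2 hn)
  exact sub_eq_zero.mp (funext hz)

noncomputable def WfunG (p : ℕ) [Fact p.Prime] (P D m j : ℕ) : ℤ_[p] :=
  if j + m = 0 ∨ j + m = P then 1 else if j + m = D then -1 else 0

lemma sum_indicator_point {M : Type*} [AddCommMonoid M] (D a : ℕ) (c : M) (ha : a < D)
    (cond : ℕ → Prop) [DecidablePred cond] (hcond : ∀ j, j < D → (cond j ↔ j = a)) :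
    (∑ j ∈ Finset.range D, if cond j then c else 0) = c := by
  have h1 : (∑ j ∈ Finset.range D, if cond j then c else 0)
      = ∑ j ∈ Finset.range D, if j = a then c else 0 := by
    refine Finset.sum_congr rfl fun j hj => ?_
    rw [if_congr (hcond j (Finset.mem_range.1 hj)) rfl rfl]
  rw [h1, Finset.sum_ite_eq' (Finset.range D) a fun _ => c,
    if_pos (Finset.mem_range.2 ha)]

lemma sum_indicator_zero {M : Type*} [AddCommMonoid M] (D : ℕ) (c : M)
    (cond : ℕ → Prop) [DecidablePred cond] (hcond : ∀ j, j < D → ¬ cond j) :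
    (∑ j ∈ Finset.range D, if cond j then c else 0) = 0 := by
  rw [Finset.sum_congr rfl fun j hj => if_neg (hcond j (Finset.mem_range.1 hj))]
  exact Finset.sum_const_zero

lemma two_mul_le_of_dvd {q m : ℕ} (h : q ∣ m) (h2 : q < m) : 2 * q ≤ m := by
  obtain ⟨c, rfl⟩ := h
  have h1 : 1 < c := by
    rcases Nat.lt_or_ge 1 c with h | h
    · exact h
    · exfalso; interval_cases c <;> omega
  calc 2 * q = q * 2 := by ring
    _ ≤ q * c := Nat.mul_le_mul_left q h1

lemma le_D_of_dvd {q m D P : ℕ} (hP : P = D + q) (hqD : q ∣ D)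
    (h : q ∣ m) (h2 : m < P) : m ≤ D := by
  by_contra hcon
  have h3 : q ∣ m - D := Nat.dvd_sub h hqD
  have h4 := Nat.le_of_dvd (by omega) h3
  omega

lemma gsum (p : ℕ) [hp : Fact p.Prime] (q D P : ℕ) (hq1 : 1 ≤ q) (hP : P = D + q)
    (hqD : q ∣ D) (h2qD : 2 * q ≤ D) (m : ℕ) (hm : m ≤ P) :
    (∑ j ∈ Finset.range D, if q ∣ j then WfunG p P D m j else 0)
      = (if m = 0 then 1 else 0) + (if (q ∣ m ∧ 2 * q ≤ m) then 1 else 0)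
        - (if (q ∣ m ∧ 1 ≤ m ∧ m ≤ D) then 1 else 0) := by
  have hqP : q ∣ P := by rw [hP]; exact dvd_add hqD (dvd_refl q)
  have perj : ∀ j, j < D →
      (if q ∣ j then WfunG p P D m j else 0)
        = (if j + m = 0 then 1 else 0)
          + (if (j + m = P ∧ q ∣ m ∧ 2 * q ≤ m) then 1 else 0)
          - (if (j + m = D ∧ q ∣ m ∧ 1 ≤ m ∧ m ≤ D) then 1 else 0) := by
    intro j hj
    by_cases hqj : q ∣ j
    · rw [if_pos hqj]
      have e2 : (j + m = P ∧ q ∣ m ∧ 2 * q ≤ m) ↔ (j + m = P) := by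
        constructor
        · exact And.left
        · intro h
          have hqm : q ∣ m := by
            have hm' : m = P - j := by omega
            rw [hm']; exact Nat.dvd_sub hqP hqj
          have hlt : q < m := by omega
          exact ⟨h, hqm, two_mul_le_of_dvd hqm hlt⟩
      have e3 : (j + m = D ∧ q ∣ m ∧ 1 ≤ m ∧ m ≤ D) ↔ (j + m = D) := by
        constructor
        · exact And.left
        · intro h
          have hqm : q ∣ m := by
            have hm' : m = D - j := by omega
            rw [hm']; exact Nat.dvd_sub hqD hqj
          exact ⟨h, hqm, by omega, by omega⟩
      rw [if_congr e2 rfl rfl, if_congr e3 rfl rfl]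
      unfold WfunG
      clear hqj hqP hqD e2 e3
      split_ifs
      all_goals try (exfalso; omega)
      all_goals norm_num
    · rw [if_neg hqj]
      have n1 : ¬(j + m = 0) := by
        intro h
        refine hqj ?_
        have hj0 : j = 0 := by omega
        rw [hj0]; exact dvd_zero q
      have n2 : ¬(j + m = P ∧ q ∣ m ∧ 2 * q ≤ m) := by
        rintro ⟨h1, h2, -⟩
        refine hqj ?_
        have hj' : j = P - m := by omega
        rw [hj']; exact Nat.dvd_sub hqP h2
      have n3 : ¬(j + m = D ∧ q ∣ m ∧ 1 ≤ m ∧ m ≤ D) := by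
        rintro ⟨h1, h2, -⟩
        refine hqj ?_
        have hj' : j = D - m := by omega
        rw [hj']; exact Nat.dvd_sub hqD h2
      rw [if_neg n1, if_neg n2, if_neg n3]
      norm_num
  rw [Finset.sum_congr rfl fun j hj => perj j (Finset.mem_range.1 hj)]
  rw [Finset.sum_sub_distrib, Finset.sum_add_distrib]
  congr 1
  congr 1
  · by_cases hm0 : m = 0
    · subst hm0
      rw [if_pos rfl]
      exact sum_indicator_point D 0 1 (by omega) _ (fun j hj => by omega)
    · rw [if_neg hm0]
      exact sum_indicator_zero D 1 _ (fun j hj => by omega)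
  · by_cases hc : q ∣ m ∧ 2 * q ≤ m
    · rw [if_pos hc]
      obtain ⟨hc1, hc2⟩ := hc
      refine sum_indicator_point D (P - m) 1 (by omega) _ (fun j hj => ?_)
      constructor
      · rintro ⟨h1, -⟩; omega
      · intro h; exact ⟨by omega, hc1, hc2⟩
    · rw [if_neg hc]
      refine sum_indicator_zero D 1 _ (fun j hj => ?_)
      rintro ⟨h1, h2, h3⟩; exact hc ⟨h2, h3⟩
  · by_cases hc : q ∣ m ∧ 1 ≤ m ∧ m ≤ D
    · rw [if_pos hc]
      obtain ⟨hc1, hc2, hc3⟩ := hc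
      refine sum_indicator_point D (D - m) 1 (by omega) _ (fun j hj => ?_)
      constructor
      · rintro ⟨h1, -⟩; omega
      · intro h; exact ⟨by omega, hc1, hc2, hc3⟩
    · rw [if_neg hc]
      refine sum_indicator_zero D 1 _ (fun j hj => ?_)
      rintro ⟨h1, hrest⟩; exact hc hrest

lemma card_multiples_lemma (q r : ℕ) (hq : 1 ≤ q) :
    ((Finset.range (q * r)).filter (fun j => q ∣ j)).card = r := by
  have himg : (Finset.range (q * r)).filter (fun j => q ∣ j)
      = (Finset.range r).image (fun c => q * c) := by
    ext j
    simp only [Finset.mem_filter, Finset.mem_image, Finset.mem_range]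
    constructor
    · rintro ⟨hj, c, rfl⟩
      exact ⟨c, lt_of_mul_lt_mul_left hj (Nat.zero_le q), rfl⟩
    · rintro ⟨c, hc, rfl⟩
      exact ⟨(Nat.mul_lt_mul_left hq).2 hc, ⟨c, rfl⟩⟩
  rw [himg, Finset.card_image_of_injective _ (fun a b h => Nat.eq_of_mul_eq_mul_left hq h),
    Finset.card_range]

open Multiplicative

theorem center_aux (p : ℕ) [hpf : Fact p.Prime] (q D P : ℕ)
    (hq1 : 1 ≤ q) (hP : P = D + q) (h2q : 2 * q ≤ D) (hD2 : 2 ≤ D) (hqD : q ∣ D)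
    (hcardne : ((((Finset.range D).filter (fun j => q ∣ j)).card : ℤ_[p]) + 1) ≠ 0)
    (φ : Multiplicative (ZMod P) →* MulAut (Multiplicative (Fin D → ℤ_[p])))
    (hφ₁ : ∀ z l : Fin D, (z : ℕ) = 0 → (l : ℕ) = D - 1 →
      φ (ofAdd 1) (ofAdd (Pi.single z 1)) = (ofAdd (Pi.single l 1))⁻¹)
    (hφ₂ : ∀ j k l : Fin D, (k : ℕ) = (j : ℕ) + 1 → (l : ℕ) = D - 1 →
      φ (ofAdd 1) (ofAdd (Pi.single k 1)) =
        if q ∣ (k : ℕ) then ofAdd (Pi.single j 1) * (ofAdd (Pi.single l 1))⁻¹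
        else ofAdd (Pi.single j 1)) :
    Subgroup.center (Multiplicative (Fin D → ℤ_[p]) ⋊[φ] Multiplicative (ZMod P)) = ⊥ := by
  haveI : NeZero P := ⟨by omega⟩
  rw [eq_bot_iff]
  intro g hg
  rw [Subgroup.mem_center_iff] at hg
  rw [Subgroup.mem_bot]
  have h1 : ∀ b : Multiplicative (Fin D → ℤ_[p]), φ g.right b = b := by
    intro b
    have h := congrArg SemidirectProduct.left (hg (SemidirectProduct.inl b))
    simp only [SemidirectProduct.mul_left, SemidirectProduct.left_inl,
      SemidirectProduct.right_inl, map_one, MulAut.one_apply] at h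
    rw [mul_comm b g.left] at h
    exact (mul_left_cancel h).symm
  have h2 : ∀ u : Multiplicative (ZMod P), φ u g.left = g.left := by
    intro u
    have h := congrArg SemidirectProduct.left (hg (SemidirectProduct.inr u))
    simp only [SemidirectProduct.mul_left, SemidirectProduct.left_inr,
      SemidirectProduct.right_inr, map_one, MulAut.one_apply, one_mul, mul_one] at h
    exact h
  obtain ⟨ψ, hψap⟩ : ∃ ψ : (Fin D → ℤ_[p]) →+ (Fin D → ℤ_[p]),
      ∀ v, φ (ofAdd 1) (ofAdd v) = ofAdd (ψ v) :=
    ⟨AddMonoidHom.mk' (fun v => Multiplicative.toAdd (φ (ofAdd 1) (ofAdd v)))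
      (fun a b => by
        show Multiplicative.toAdd (φ (ofAdd 1) (ofAdd (a + b))) = _
        rw [ofAdd_add, map_mul, toAdd_mul]), fun v => rfl⟩
  have hψE : ∀ k : Fin D, ψ (Pi.single k 1)
      = fun i : Fin D => (if (i : ℕ) + 1 = (k : ℕ) then (1 : ℤ_[p]) else 0)
          - (if ((i : ℕ) = D - 1 ∧ q ∣ (k : ℕ)) then 1 else 0) := by
    intro k
    have hlval : ((⟨D - 1, by omega⟩ : Fin D) : ℕ) = D - 1 := rfl
    rcases Nat.eq_zero_or_pos (k : ℕ) with hk | hk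
    · have hval := hφ₁ k ⟨D - 1, by omega⟩ hk rfl
      rw [hψap] at hval
      have hval2 : ψ (Pi.single k 1) = -(Pi.single (⟨D - 1, by omega⟩ : Fin D) 1) := by
        have := congrArg Multiplicative.toAdd hval
        simpa using this
      rw [hval2]
      funext i
      have hne : ¬ ((i : ℕ) + 1 = (k : ℕ)) := by omega
      have hdvd : q ∣ (k : ℕ) := by rw [hk]; exact dvd_zero q
      rw [Pi.neg_apply, Pi.single_apply, if_neg hne]
      by_cases hi : (i : ℕ) = D - 1
      · rw [if_pos (Fin.ext hi : i = ⟨D - 1, by omega⟩), if_pos ⟨hi, hdvd⟩]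
        norm_num
      · rw [if_neg (fun h => hi (congrArg Fin.val h)), if_neg (fun h => hi h.1)]
        norm_num
    · have hjlt : (k : ℕ) - 1 < D := by have := k.isLt; omega
      have hval := hφ₂ ⟨(k : ℕ) - 1, hjlt⟩ k ⟨D - 1, by omega⟩ (by simp; omega) rfl
      rw [hψap] at hval
      by_cases hdvd : q ∣ (k : ℕ)
      · rw [if_pos hdvd] at hval
        have hval2 : ψ (Pi.single k 1)
            = Pi.single (⟨(k : ℕ) - 1, hjlt⟩ : Fin D) 1
              - Pi.single (⟨D - 1, by omega⟩ : Fin D) 1 := by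
          have := congrArg Multiplicative.toAdd hval
          simpa [sub_eq_add_neg] using this
        rw [hval2]
        funext i
        rw [Pi.sub_apply, Pi.single_apply, Pi.single_apply]
        have e1 : (i = (⟨(k : ℕ) - 1, hjlt⟩ : Fin D)) ↔ ((i : ℕ) + 1 = (k : ℕ)) := by
          rw [Fin.ext_iff]; simp; omega
        have e2 : (i = (⟨D - 1, by omega⟩ : Fin D)) ↔ ((i : ℕ) = D - 1 ∧ q ∣ (k : ℕ)) := by
          rw [Fin.ext_iff]
          exact ⟨fun h => ⟨h, hdvd⟩, fun h => h.1⟩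
        rw [if_congr e1 rfl rfl, if_congr e2 rfl rfl]
      · rw [if_neg hdvd] at hval
        have hval2 : ψ (Pi.single k 1) = Pi.single (⟨(k : ℕ) - 1, hjlt⟩ : Fin D) 1 := by
          have := congrArg Multiplicative.toAdd hval
          simpa using this
        rw [hval2]
        funext i
        rw [Pi.single_apply]
        have e1 : (i = (⟨(k : ℕ) - 1, hjlt⟩ : Fin D)) ↔ ((i : ℕ) + 1 = (k : ℕ)) := by
          rw [Fin.ext_iff]; simp; omega
        rw [if_congr e1 rfl rfl, if_neg (fun h : ((i : ℕ) = D - 1 ∧ q ∣ (k : ℕ)) => hdvd h.2), sub_zero]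
  have hψx : ∀ x : Fin D → ℤ_[p], ψ x = fun i : Fin D =>
      (if h : (i : ℕ) + 1 < D then x ⟨(i : ℕ) + 1, h⟩ else 0)
        - (if (i : ℕ) = D - 1 then (∑ k : Fin D, if q ∣ (k : ℕ) then x k else 0) else 0) := by
    intro x
    have hx : x = ∑ k : Fin D, x k • (Pi.single k (1 : ℤ_[p]) : Fin D → ℤ_[p]) := by
      have hone : ∀ k : Fin D, x k • (Pi.single k (1 : ℤ_[p]) : Fin D → ℤ_[p]) = Pi.single k (x k) := by
        intro k
        funext j
        rw [Pi.smul_apply, Pi.single_apply, Pi.single_apply, smul_eq_mul]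
        split_ifs <;> simp
      rw [Finset.sum_congr rfl fun k _ => hone k, Finset.univ_sum_single]
    have hsum : ψ x = ∑ k : Fin D, x k • ψ (Pi.single k 1) := by
      conv_lhs => rw [hx]
      rw [map_sum]
      exact Finset.sum_congr rfl fun k _ => aux_linear ψ (x k) _
    rw [hsum]
    funext i
    rw [Finset.sum_apply]
    have hterm : ∀ k : Fin D, (x k • ψ (Pi.single k 1)) i
        = x k * (if (i : ℕ) + 1 = (k : ℕ) then (1 : ℤ_[p]) else 0)
          - x k * (if ((i : ℕ) = D - 1 ∧ q ∣ (k : ℕ)) then 1 else 0) := by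
      intro k
      rw [hψE k]
      show x k * _ = _
      rw [mul_sub]
    rw [Finset.sum_congr rfl fun k _ => hterm k, Finset.sum_sub_distrib]
    congr 1
    · by_cases hi : (i : ℕ) + 1 < D
      · rw [dif_pos hi]
        have hconv : ∀ k : Fin D, x k * (if (i : ℕ) + 1 = (k : ℕ) then (1 : ℤ_[p]) else 0)
            = if k = ⟨(i : ℕ) + 1, hi⟩ then x k else 0 := by
          intro k
          by_cases h : k = ⟨(i : ℕ) + 1, hi⟩
          · rw [if_pos h, if_pos (by rw [h]), mul_one]
          · rw [if_neg h, if_neg (fun hc => h (Fin.ext hc.symm)), mul_zero]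
        rw [Finset.sum_congr rfl fun k _ => hconv k,
          Finset.sum_ite_eq' Finset.univ _ (fun k => x k), if_pos (Finset.mem_univ _)]
      · rw [dif_neg hi, Finset.sum_eq_zero]
        intro k _
        rw [if_neg (by have := k.isLt; omega), mul_zero]
    · by_cases hi : (i : ℕ) = D - 1
      · rw [if_pos hi]
        refine Finset.sum_congr rfl fun k _ => ?_
        by_cases h : q ∣ (k : ℕ)
        · rw [if_pos ⟨hi, h⟩, if_pos h, mul_one]
        · rw [if_neg (fun hc : ((i : ℕ) = D - 1 ∧ q ∣ (k : ℕ)) => h hc.2), if_neg h, mul_zero]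
      · rw [if_neg hi, Finset.sum_eq_zero]
        intro k _
        rw [if_neg (fun hc : ((i : ℕ) = D - 1 ∧ q ∣ (k : ℕ)) => hi hc.1), mul_zero]
  -- g.left = 1
  have hfixg : ψ (Multiplicative.toAdd g.left) = Multiplicative.toAdd g.left := by
    have h := hψap (Multiplicative.toAdd g.left)
    rw [ofAdd_toAdd, h2 (ofAdd 1)] at h
    exact (congrArg Multiplicative.toAdd h).symm
  set x := Multiplicative.toAdd g.left with hxdef
  have heq := (hψx x).symm.trans hfixg
  have hconst : ∀ (mm : ℕ) (h : mm < D), x ⟨mm, h⟩ = x ⟨0, by omega⟩ := by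
    intro mm
    induction mm with
    | zero => intro h; rfl
    | succ kk ih =>
      intro h
      have hk : kk < D := by omega
      have hcoord := congrFun heq ⟨kk, hk⟩
      rw [dif_pos (show ((⟨kk, hk⟩ : Fin D) : ℕ) + 1 < D from h),
        if_neg (show ¬ ((⟨kk, hk⟩ : Fin D) : ℕ) = D - 1 by simp; omega), sub_zero] at hcoord
      rw [← ih hk]
      exact hcoord
  have hlast := congrFun heq ⟨D - 1, by omega⟩
  rw [dif_neg (show ¬ ((⟨D - 1, by omega⟩ : Fin D) : ℕ) + 1 < D by simp; omega),
    if_pos (show ((⟨D - 1, by omega⟩ : Fin D) : ℕ) = D - 1 from rfl), zero_sub] at hlast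
  have hsumx : (∑ k : Fin D, if q ∣ (k : ℕ) then x k else 0)
      = ((((Finset.range D).filter (fun j => q ∣ j)).card : ℤ_[p])) * x ⟨0, by omega⟩ := by
    have hterm : ∀ k : Fin D, (if q ∣ (k : ℕ) then x k else 0)
        = (if q ∣ (k : ℕ) then (1 : ℤ_[p]) else 0) * x ⟨0, by omega⟩ := by
      intro k
      by_cases h : q ∣ (k : ℕ)
      · rw [if_pos h, if_pos h, one_mul]
        exact hconst (k : ℕ) k.isLt
      · rw [if_neg h, if_neg h, zero_mul]
    rw [Finset.sum_congr rfl fun k _ => hterm k, ← Finset.sum_mul]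
    congr 1
    rw [Fin.sum_univ_eq_sum_range (fun j => if q ∣ j then (1 : ℤ_[p]) else 0) D,
      Finset.sum_boole]
  have hx0 : x ⟨0, by omega⟩
      = -(((((Finset.range D).filter (fun j => q ∣ j)).card : ℤ_[p])) * x ⟨0, by omega⟩) := by
    rw [← hsumx, ← hconst (D - 1) (by omega), ← hlast]
  have hzero : x ⟨0, by omega⟩ = 0 := by
    have hfac : (((((Finset.range D).filter (fun j => q ∣ j)).card : ℤ_[p])) + 1)
        * x ⟨0, by omega⟩ = 0 := by
      linear_combination hx0
    rcases mul_eq_zero.mp hfac with h | h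
    · exact absurd h hcardne
    · exact h
  have hxzero : x = 0 := by
    funext i
    have hi : x i = x ⟨(i : ℕ), i.isLt⟩ := rfl
    rw [hi, hconst (i : ℕ) i.isLt, hzero]
    rfl
  have hgl : g.left = 1 := by
    calc g.left = ofAdd x := rfl
      _ = ofAdd 0 := by rw [hxzero]
      _ = 1 := rfl
  -- g.right = 1 via the orbit of the basis vector e_0
  have horbit : ∀ m : ℕ, m ≤ P →
      ((φ (ofAdd (1 : ZMod P))) ^ m) (ofAdd (Pi.single (⟨0, by omega⟩ : Fin D) (1 : ℤ_[p])))
        = ofAdd (fun j : Fin D => WfunG p P D m (j : ℕ)) := by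
    intro m
    induction m with
    | zero =>
      intro _
      rw [pow_zero, MulAut.one_apply]
      congr 1
      funext jj
      unfold WfunG
      rw [Pi.single_apply]
      have hlt := jj.isLt
      have e : (jj = (⟨0, by omega⟩ : Fin D)) ↔ ((jj : ℕ) + 0 = 0) := by
        rw [Fin.ext_iff]; simp
      rw [if_congr e rfl rfl]
      split_ifs
      all_goals try (exfalso; omega)
      all_goals norm_num
    | succ m ih =>
      intro hm1
      rw [pow_succ', MulAut.mul_apply, ih (by omega), hψap]
      congr 1
      rw [hψx]
      funext i
      have hgs := gsum p q D P hq1 hP hqD h2q m (by omega)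
      by_cases hi : (i : ℕ) + 1 < D
      · rw [dif_pos hi, if_neg (show ¬ (i : ℕ) = D - 1 by omega), sub_zero]
        show WfunG p P D m ((i : ℕ) + 1) = WfunG p P D (m + 1) (i : ℕ)
        unfold WfunG
        have e : (i : ℕ) + 1 + m = (i : ℕ) + (m + 1) := by omega
        rw [e]
      · have hi' : (i : ℕ) = D - 1 := by have := i.isLt; omega
        rw [dif_neg hi, if_pos hi', zero_sub]
        have hsum2 : (∑ k : Fin D, if q ∣ (k : ℕ) then WfunG p P D m (k : ℕ) else 0)
            = ∑ jj ∈ Finset.range D, (if q ∣ jj then WfunG p P D m jj else 0) :=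
          Fin.sum_univ_eq_sum_range (fun jj => if q ∣ jj then WfunG p P D m jj else 0) D
        rw [hsum2, hgs]
        show _ = WfunG p P D (m + 1) (i : ℕ)
        unfold WfunG
        rw [hi']
        have e : D - 1 + (m + 1) = D + m := by omega
        rw [e]
        by_cases hqm : q ∣ m
        · by_cases hm0 : m = 0
          · subst hm0
            rw [if_pos rfl,
              if_neg (fun h : (q ∣ 0 ∧ 2 * q ≤ 0) => absurd h.2 (by omega)),
              if_neg (fun h : (q ∣ 0 ∧ 1 ≤ 0 ∧ 0 ≤ D) => absurd h.2.1 (by omega)),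
              if_neg (show ¬(D + 0 = 0 ∨ D + 0 = P) by omega),
              if_pos (show D + 0 = D by omega)]
            norm_num
          · by_cases hmq : m = q
            · rw [if_neg hm0,
                if_neg (fun h : (q ∣ m ∧ 2 * q ≤ m) => absurd h.2 (by omega)),
                if_pos ⟨hqm, by omega, by omega⟩,
                if_pos (Or.inr (show D + m = P by omega))]
              norm_num
            · have h2qm : 2 * q ≤ m := by
                obtain ⟨c, hc⟩ := hqm
                have hcne0 : c ≠ 0 := fun h => hm0 (by rw [hc, h, mul_zero])
                have hcne1 : c ≠ 1 := fun h => hmq (by rw [hc, h, mul_one])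
                have hc2 : 2 ≤ c := by omega
                have hmul : q * 2 ≤ q * c := Nat.mul_le_mul_left q hc2
                omega
              have hmD : m ≤ D := le_D_of_dvd hP hqD hqm (by omega)
              rw [if_neg hm0, if_pos ⟨hqm, h2qm⟩, if_pos ⟨hqm, by omega, hmD⟩,
                if_neg (show ¬(D + m = 0 ∨ D + m = P) by omega),
                if_neg (show ¬ D + m = D by omega)]
              norm_num
        · have hm0 : ¬ m = 0 := fun h => hqm (by rw [h]; exact dvd_zero q)
          have hne1 : ¬(D + m = 0 ∨ D + m = P) := by
            rintro (h | h)
            · omega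
            · have hmq : m = q := by omega
              exact hqm (hmq ▸ dvd_refl q)
          rw [if_neg hm0, if_neg (fun h : (q ∣ m ∧ 2 * q ≤ m) => hqm h.1),
            if_neg (fun h : (q ∣ m ∧ 1 ≤ m ∧ m ≤ D) => hqm h.1),
            if_neg hne1, if_neg (show ¬ D + m = D by omega)]
          norm_num
  have hgr1 : g.right = 1 := by
    have hval : φ g.right
        = (φ (ofAdd (1 : ZMod P))) ^ ((Multiplicative.toAdd g.right).val) := by
      rw [← map_pow]
      congr 1
      rw [← ofAdd_nsmul]
      have hsm : ((Multiplicative.toAdd g.right).val) • (1 : ZMod P)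
          = Multiplicative.toAdd g.right := by
        rw [nsmul_eq_mul, mul_one, ZMod.natCast_val, ZMod.cast_id]
      rw [hsm]
      rfl
    have hk := h1 (ofAdd (Pi.single (⟨0, by omega⟩ : Fin D) (1 : ℤ_[p])))
    rw [hval, horbit ((Multiplicative.toAdd g.right).val)
      (le_of_lt (ZMod.val_lt _))] at hk
    have hk0 := congrFun (congrArg Multiplicative.toAdd hk) (⟨0, by omega⟩ : Fin D)
    simp only [toAdd_ofAdd] at hk0
    rw [Pi.single_apply, if_pos rfl] at hk0
    have hk0' : WfunG p P D ((Multiplicative.toAdd g.right).val) 0 = 1 := hk0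
    have hnP : (Multiplicative.toAdd g.right).val < P := ZMod.val_lt _
    have hn0 : (Multiplicative.toAdd g.right).val = 0 := by
      by_contra hcon
      unfold WfunG at hk0'
      by_cases hDeq : 0 + (Multiplicative.toAdd g.right).val = D
      · rw [if_neg (by omega), if_pos hDeq] at hk0'
        norm_num at hk0'
      · rw [if_neg (by omega), if_neg hDeq] at hk0'
        norm_num at hk0'
    have ht0 : Multiplicative.toAdd g.right = 0 := by
      have := (ZMod.val_eq_zero (Multiplicative.toAdd g.right)).mp hn0
      exact this
    calc g.right = ofAdd (Multiplicative.toAdd g.right) := rfl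
      _ = ofAdd 0 := by rw [ht0]
      _ = 1 := rfl
  have hfin : g = ⟨g.left, g.right⟩ := rfl
  rw [hfin, hgl, hgr1]
  rfl

open Multiplicative in
theorem center_K_s (p : ℕ) [Fact p.Prime] (hodd : Odd p) (s : ℕ) (hs : 1 ≤ s)
    (φ : Multiplicative (ZMod (p ^ s)) →*
      MulAut (Multiplicative (Fin (p ^ (s - 1) * (p - 1)) → ℤ_[p])))
    (hφ₁ : ∀ z l : Fin (p ^ (s - 1) * (p - 1)), (z : ℕ) = 0 →
      (l : ℕ) = p ^ (s - 1) * (p - 1) - 1 →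
      φ (ofAdd 1) (ofAdd (Pi.single z 1)) = (ofAdd (Pi.single l 1))⁻¹)
    (hφ₂ : ∀ j k l : Fin (p ^ (s - 1) * (p - 1)), (k : ℕ) = (j : ℕ) + 1 →
      (l : ℕ) = p ^ (s - 1) * (p - 1) - 1 →
      φ (ofAdd 1) (ofAdd (Pi.single k 1)) =
        if p ^ (s - 1) ∣ (k : ℕ) then ofAdd (Pi.single j 1) * (ofAdd (Pi.single l 1))⁻¹
        else ofAdd (Pi.single j 1)) :
    Subgroup.center (Multiplicative (Fin (p ^ (s - 1) * (p - 1)) → ℤ_[p]) ⋊[φ] Multiplicative (ZMod (p ^ s))) = ⊥ := by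
  have hp : p.Prime := Fact.out
  have hp3 : 3 ≤ p := by
    have h2 : 2 ≤ p := hp.two_le
    have hne : p ≠ 2 := by
      rintro rfl
      exact (by decide : ¬ Odd 2) hodd
    omega
  have hq1 : 1 ≤ p ^ (s - 1) := Nat.one_le_pow _ _ hp.pos
  have hP : p ^ s = p ^ (s - 1) * (p - 1) + p ^ (s - 1) := by
    have h1 : p ^ (s - 1) * p = p ^ s := by rw [← pow_succ]; congr 1; omega
    have h2 : p ^ (s - 1) * (p - 1) + p ^ (s - 1) = p ^ (s - 1) * (p - 1 + 1) := by
      rw [Nat.mul_succ]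
    rw [h2, ← h1]
    congr 1
    omega
  have h2q : 2 * p ^ (s - 1) ≤ p ^ (s - 1) * (p - 1) := by
    have h2 : 2 ≤ p - 1 := by omega
    calc 2 * p ^ (s - 1) = p ^ (s - 1) * 2 := by ring
      _ ≤ p ^ (s - 1) * (p - 1) := Nat.mul_le_mul_left _ h2
  have hD2 : 2 ≤ p ^ (s - 1) * (p - 1) := by omega
  have hqD : p ^ (s - 1) ∣ p ^ (s - 1) * (p - 1) := dvd_mul_right _ _
  have hcard : ((Finset.range (p ^ (s - 1) * (p - 1))).filter
      (fun j => p ^ (s - 1) ∣ j)).card = p - 1 :=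
    card_multiples_lemma _ _ hq1
  have hcardne : ((((Finset.range (p ^ (s - 1) * (p - 1))).filter
      (fun j => p ^ (s - 1) ∣ j)).card : ℤ_[p]) + 1) ≠ 0 := by
    rw [hcard]
    have hcast : ((p - 1 : ℕ) : ℤ_[p]) + 1 = (p : ℤ_[p]) := by
      rw [Nat.cast_sub (by omega : 1 ≤ p)]
      push_cast
      ring
    rw [hcast]
    exact Nat.cast_ne_zero.mpr hp.ne_zero
  exact center_aux p (p ^ (s - 1)) (p ^ (s - 1) * (p - 1)) (p ^ s)
    hq1 hP h2q hD2 hqD hcardne φ hφ₁ hφ₂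
end
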